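/- arXiv:1906.03748 — 2 statements merged into one kernel-verified Lean document; each statement's English description precedes it below -/
import Mathlib

section
/- Let H be a graph and c, d positive integers such that χ(K_c^H) ≥ c + 1. Then χ(K_{cd}^H) ≥ χ_{c+1}(K(cd, c)), where χ_{c+1} denotes the (c+1)-st multichromatic number. -/
open SimpleGraph

/-- The categorical (tensor) product of two simple graphs. -/
def tensorProd {V W : Type*} (G : SimpleGraph V) (H : SimpleGraph W) :
    SimpleGraph (V × W) where
  Adj a b := G.Adj a.1 b.1 ∧ H.Adj a.2 b.2
  symm := ⟨fun a b h => ⟨h.1.symm, h.2.symm⟩⟩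
  loopless := ⟨fun a h => G.loopless.irrefl a.1 h.1⟩

/-- The exponential graph `K_c^H`: vertices are functions `V(H) → Fin c`,
two distinct functions `f, g` are adjacent iff `f u ≠ g v` for every edge `uv` of `H`. -/
def expGraph {V : Type*} (H : SimpleGraph V) (c : ℕ) : SimpleGraph (V → Fin c) where
  Adj f g := f ≠ g ∧ ∀ u v, H.Adj u v → f u ≠ g v
  symm := ⟨fun f g h => ⟨h.1.symm, fun u v huv => (h.2 v u huv.symm).symm⟩⟩
  loopless := ⟨fun f h => h.1 rfl⟩

/-- The Kneser graph `K(m, n)`: vertices are the `n`-element subsets of an `m`-element set,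
two distinct such subsets being adjacent iff they are disjoint. -/
def kneser (m n : ℕ) : SimpleGraph {A : Finset (Fin m) // A.card = n} where
  Adj A B := A ≠ B ∧ Disjoint A.1 B.1
  symm := ⟨fun A B h => ⟨h.1.symm, h.2.symm⟩⟩
  loopless := ⟨fun A h => h.1 rfl⟩

/-- The `n`-th multichromatic number of a graph: the least `m` such that the graph
admits a homomorphism to the Kneser graph `K(m, n)`. -/
noncomputable def multichromatic {V : Type*} (H : SimpleGraph V) (n : ℕ) : ℕ :=
  sInf {m : ℕ | Nonempty (H →g kneser m n)}

/-- The Poljak–Rödl function `f(n) = min {χ(G × H) : χ(G) ≥ n, χ(H) ≥ n}`. -/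
noncomputable def poljakRodl (n : ℕ) : ℕ :=
  sInf {k : ℕ | ∃ (p q : ℕ) (G : SimpleGraph (Fin p)) (H : SimpleGraph (Fin q)),
    (n : ℕ∞) ≤ G.chromaticNumber ∧ (n : ℕ∞) ≤ H.chromaticNumber ∧
    (tensorProd G H).chromaticNumber = (k : ℕ∞)}

/-- The lexicographic product `G[H]`. -/
def lexProd {V W : Type*} (G : SimpleGraph V) (H : SimpleGraph W) :
    SimpleGraph (V × W) where
  Adj a b := G.Adj a.1 b.1 ∨ (a.1 = b.1 ∧ H.Adj a.2 b.2)
  symm := ⟨fun a b h => by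
    rcases h with h | ⟨h1, h2⟩
    · exact Or.inl h.symm
    · exact Or.inr ⟨h1.symm, h2.symm⟩⟩
  loopless := ⟨fun a h => by
    rcases h with h | ⟨_, h2⟩
    · exact G.loopless.irrefl a.1 h
    · exact H.loopless.irrefl a.2 h2⟩

/-!
A proper `n`-colouring `φ` of `K_m^H` assigns to every `A ⊆ Fin m` the set of colours that `φ`
uses on the functions with values in `A`. When `|A| = c` these functions span a copy of `K_c^H`,
so at least `χ(K_c^H) ≥ c + 1` colours occur; when `A` and `B` are disjoint, a function into `A`
and a function into `B` are adjacent in `K_m^H` (as `V(H)` is nonempty), so the two colour sets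
are disjoint. Choosing `c + 1` of the colours of each `c`-set `A` is therefore a homomorphism
`K(m, c) → K(n, c + 1)`.
-/

open Finset

section

variable {V : Type*} {H : SimpleGraph V}

theorem nonempty_of_one_lt_chromaticNumber_expGraph {c : ℕ}
    (h : 1 < (expGraph H c).chromaticNumber) : Nonempty V := by
  by_contra hV
  have : IsEmpty V := not_nonempty_iff.mp hV
  exact (chromaticNumber_le_one_of_subsingleton _).not_gt h

variable (H) in
def expGraphHomOfEmbedding {c m : ℕ} (e : Fin c ↪ Fin m) : expGraph H c →g expGraph H m where
  toFun f := e ∘ f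
  map_rel' hfg :=
    ⟨fun h => hfg.1 (e.injective.comp_left h), fun u v huv h => hfg.2 u v huv (e.injective h)⟩

open Classical in
noncomputable def colorsOn {m : ℕ} {α : Type*} [Fintype α] (φ : (expGraph H m).Coloring α)
    (A : Finset (Fin m)) : Finset α :=
  {a | ∃ f : V → Fin m, (∀ v, f v ∈ A) ∧ φ f = a}

section colorsOn

variable {m : ℕ} {α : Type*} [Fintype α] (φ : (expGraph H m).Coloring α)

theorem mem_colorsOn {A : Finset (Fin m)} {a : α} :
    a ∈ colorsOn φ A ↔ ∃ f : V → Fin m, (∀ v, f v ∈ A) ∧ φ f = a := by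
  simp [colorsOn]

theorem chromaticNumber_expGraph_le_card_colorsOn {c : ℕ} {A : Finset (Fin m)} (hA : #A = c) :
    (expGraph H c).chromaticNumber ≤ #(colorsOn φ A) := by
  let F := expGraphHomOfEmbedding H (A.orderEmbOfFin hA).toEmbedding
  have hF : ∀ f v, F f v ∈ A := fun f v => A.orderEmbOfFin_mem hA (f v)
  let ψ : (expGraph H c).Coloring (colorsOn φ A) :=
    Coloring.mk (fun f => ⟨φ (F f), (mem_colorsOn φ).2 ⟨F f, hF f, rfl⟩⟩)
      fun hfg h => φ.valid (F.map_adj hfg) (congrArg Subtype.val h)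
  simpa using ψ.colorable.chromaticNumber_le

theorem disjoint_colorsOn [Nonempty V] {A B : Finset (Fin m)} (hAB : Disjoint A B) :
    Disjoint (colorsOn φ A) (colorsOn φ B) := by
  refine Finset.disjoint_left.2 fun a haA haB => ?_
  obtain ⟨f, hf, rfl⟩ := (mem_colorsOn φ).1 haA
  obtain ⟨g, hg, hfg⟩ := (mem_colorsOn φ).1 haB
  have hadj : (expGraph H m).Adj f g := by
    refine ⟨fun h => ?_, fun u v _ h => Finset.disjoint_left.1 hAB (hf u) (h ▸ hg v)⟩
    obtain ⟨v⟩ := ‹Nonempty V›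
    exact Finset.disjoint_left.1 hAB (hf v) (h ▸ hg v)
  exact φ.valid hadj hfg.symm

end colorsOn

end

theorem nonempty_kneser_hom_of_disjoint {m c n k : ℕ} (hk : 0 < k)
    (S : Finset (Fin m) → Finset (Fin n)) (hcard : ∀ A, #A = c → k ≤ #(S A))
    (hdisj : ∀ A B, Disjoint A B → Disjoint (S A) (S B)) :
    Nonempty (kneser m c →g kneser n k) := by
  choose T hTS hTcard using fun A : {A : Finset (Fin m) // #A = c} =>
    Finset.exists_subset_card_eq (hcard A.1 A.2)
  refine ⟨⟨fun A => ⟨T A, hTcard A⟩, fun {A B} hAB => ?_⟩⟩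
  have hT : Disjoint (T A) (T B) := (hdisj A B hAB.2).mono (hTS A) (hTS B)
  refine ⟨fun h => ?_, hT⟩
  have hTA : (T A).Nonempty := Finset.card_pos.1 (hTcard A ▸ hk)
  rw [show T A = T B from congrArg Subtype.val h] at hT hTA
  exact hTA.ne_empty (disjoint_self.1 hT)

theorem multichromatic_le_of_hom {W : Type*} {G : SimpleGraph W} {n k : ℕ} (f : G →g kneser n k) :
    multichromatic G k ≤ n :=
  Nat.sInf_le ⟨f⟩

theorem expGraph_chromaticNumber_ge_multichromatic_general {V : Type*}
    (H : SimpleGraph V) (c d : ℕ) (hc : 0 < c)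
    (hchi : ((c + 1 : ℕ) : ℕ∞) ≤ (expGraph H c).chromaticNumber) :
    ((multichromatic (kneser (c * d) c) (c + 1) : ℕ) : ℕ∞) ≤
      (expGraph H (c * d)).chromaticNumber := by
  have : Nonempty V := nonempty_of_one_lt_chromaticNumber_expGraph <|
    lt_of_lt_of_le (by exact_mod_cast Nat.succ_lt_succ hc) hchi
  refine le_chromaticNumber_iff_coloring.2 fun n φ => ?_
  obtain ⟨f⟩ := nonempty_kneser_hom_of_disjoint c.succ_pos (colorsOn φ)
    (fun A hA => by exact_mod_cast hchi.trans (chromaticNumber_expGraph_le_card_colorsOn φ hA))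
    (fun _ _ => disjoint_colorsOn φ)
  exact_mod_cast multichromatic_le_of_hom f

/-- If `χ(K_c^H) ≥ c + 1`, then `χ(K_{cd}^H) ≥ χ_{c+1}(K(cd, c))`. -/
theorem expGraph_chromaticNumber_ge_multichromatic {V : Type*} [Fintype V]
    (H : SimpleGraph V) (c d : ℕ) (hc : 0 < c) (hd : 0 < d)
    (hchi : ((c + 1 : ℕ) : ℕ∞) ≤ (expGraph H c).chromaticNumber) :
    ((multichromatic (kneser (c * d) c) (c + 1) : ℕ) : ℕ∞) ≤
      (expGraph H (c * d)).chromaticNumber :=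
  expGraph_chromaticNumber_ge_multichromatic_general H c d hc hchi
end

section
/- Suppose that for every positive integer d there exist a positive integer c ≥ 2 and a graph H with χ(K_c^H) ≥ c + 1 and χ(H) ≥ 2cd such that, for all but finitely many n, the Poljak–Rödl function satisfies f(n + d) ≤ n. Then in particular, if c and H satisfy χ(K_c^H) ≥ c + 1 and χ(H) ≥ cd + d, then χ(K_{cd}^H) ≥ d(c + 1) and f(cd + d) ≤ cd. -/
open SimpleGraph

/-! Composing with the embeddings `Fin a ↪ Fin (a + b) ↩ Fin b` places `K_a^H` and `K_b^H` inside
`K_{a+b}^H` with every vertex of one adjacent to every vertex of the other (as soon as `H` has a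
vertex), so `χ(K_a^H) + χ(K_b^H) ≤ χ(K_{a+b}^H)`; iterating, `χ(K_{cd}^H) ≥ d χ(K_c^H) ≥ cd + d`.
Evaluation `(v, g) ↦ g v` colours `H × K_{cd}^H` with `cd` colours while both factors have
chromatic number at least `cd + d`, whence `f(cd + d) ≤ cd`. -/

namespace SimpleGraph

variable {V W V₁ V₂ α : Type*}

lemma Coloring.colorable_ncard_range {G : SimpleGraph V} [Finite α] (C : G.Coloring α) :
    G.Colorable (Set.range C).ncard := by
  have : Fintype (Set.range C) := Fintype.ofFinite _
  rw [← Nat.card_coe_set_eq, Nat.card_eq_fintype_card]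
  exact (Coloring.mk (fun v => ⟨C v, v, rfl⟩) fun h hC =>
    C.valid h (congrArg Subtype.val hC)).colorable

/-- The colours used on the two images are disjoint. -/
lemma chromaticNumber_add_le_of_forall_adj {G : SimpleGraph W} {G₁ : SimpleGraph V₁}
    {G₂ : SimpleGraph V₂} (f₁ : G₁ →g G) (f₂ : G₂ →g G) (hadj : ∀ x y, G.Adj (f₁ x) (f₂ y)) :
    G₁.chromaticNumber + G₂.chromaticNumber ≤ G.chromaticNumber := by
  refine le_iInf₂ fun k hk => ?_
  obtain ⟨C⟩ := hk
  have hdisj : Disjoint (Set.range (C.comp f₁)) (Set.range (C.comp f₂)) := by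
    rw [Set.disjoint_left]
    rintro _ ⟨x, rfl⟩ ⟨y, hy⟩
    exact C.valid (hadj x y) hy.symm
  calc G₁.chromaticNumber + G₂.chromaticNumber
      ≤ ((Set.range (C.comp f₁)).ncard + (Set.range (C.comp f₂)).ncard : ℕ) := by
        push_cast
        gcongr <;> exact Colorable.chromaticNumber_le (Coloring.colorable_ncard_range _)
    _ = ((Set.range (C.comp f₁) ∪ Set.range (C.comp f₂)).ncard : ℕ) := by
        rw [Set.ncard_union_eq hdisj (Set.toFinite _) (Set.toFinite _)]
    _ ≤ k := by
        exact_mod_cast (Set.ncard_le_ncard (Set.subset_univ _)).trans_eq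
          (by rw [Set.ncard_univ, Nat.card_eq_fintype_card, Fintype.card_fin])

end SimpleGraph

open SimpleGraph

variable {V : Type*}

lemma nonempty_of_two_le_chromaticNumber_expGraph {H : SimpleGraph V} {c : ℕ}
    (h : 2 ≤ (expGraph H c).chromaticNumber) : Nonempty V := by
  obtain ⟨f, g, hfg⟩ := ne_bot_iff_exists_adj.mp (two_le_chromaticNumber_iff_ne_bot.mp h)
  obtain ⟨v, -⟩ := Function.ne_iff.mp hfg.1
  exact ⟨v⟩

def expGraphPostcomp (H : SimpleGraph V) {a b : ℕ} (e : Fin a ↪ Fin b) :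
    expGraph H a →g expGraph H b where
  toFun g := e ∘ g
  map_rel' := fun ⟨hne, hadj⟩ =>
    ⟨fun h => hne (funext fun v => e.injective (congrFun h v)),
      fun u v huv h => hadj u v huv (e.injective h)⟩

lemma expGraphPostcomp_adj [Nonempty V] (H : SimpleGraph V) {a b m : ℕ} {e₁ : Fin a ↪ Fin m}
    {e₂ : Fin b ↪ Fin m} (he : ∀ i j, e₁ i ≠ e₂ j) (g₁ : V → Fin a) (g₂ : V → Fin b) :
    (expGraph H m).Adj (expGraphPostcomp H e₁ g₁) (expGraphPostcomp H e₂ g₂) :=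
  ⟨fun h => he _ _ (congrFun h (Classical.arbitrary V)), fun u v _ => he (g₁ u) (g₂ v)⟩

lemma chromaticNumber_expGraph_add_le [Nonempty V] (H : SimpleGraph V) (a b : ℕ) :
    (expGraph H a).chromaticNumber + (expGraph H b).chromaticNumber ≤
      (expGraph H (a + b)).chromaticNumber :=
  chromaticNumber_add_le_of_forall_adj _ _ <|
    expGraphPostcomp_adj H (e₁ := Fin.castAddEmb b) (e₂ := Fin.natAddEmb a) fun i j h => by
      have := congrArg Fin.val h
      simp only [Fin.coe_castAddEmb, Fin.val_castAdd, Fin.natAddEmb_apply, Fin.val_natAdd] at this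
      omega

lemma mul_chromaticNumber_expGraph_le [Nonempty V] (H : SimpleGraph V) (c d : ℕ) :
    (d : ℕ∞) * (expGraph H c).chromaticNumber ≤ (expGraph H (c * d)).chromaticNumber := by
  induction d with
  | zero => simp
  | succ d ih =>
    calc ((d + 1 : ℕ) : ℕ∞) * (expGraph H c).chromaticNumber
        = d * (expGraph H c).chromaticNumber + (expGraph H c).chromaticNumber := by
          push_cast; ring
      _ ≤ (expGraph H (c * d)).chromaticNumber + (expGraph H c).chromaticNumber := by gcongr
      _ ≤ (expGraph H (c * (d + 1))).chromaticNumber := chromaticNumber_expGraph_add_le H _ _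

lemma colorable_tensorProd_expGraph (H : SimpleGraph V) (c : ℕ) :
    (tensorProd H (expGraph H c)).Colorable c :=
  ⟨Coloring.mk (fun x => x.2 x.1) fun h => h.2.2 _ _ h.1⟩

lemma poljakRodl_le_of_colorable {W : Type*} [Finite V] [Finite W] {G : SimpleGraph V}
    {H : SimpleGraph W} {n k : ℕ} (hG : (n : ℕ∞) ≤ G.chromaticNumber)
    (hH : (n : ℕ∞) ≤ H.chromaticNumber) (hk : (tensorProd G H).Colorable k) :
    poljakRodl n ≤ k := by
  set eG := Iso.comap (Finite.equivFin V).symm G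
  set eH := Iso.comap (Finite.equivFin W).symm H
  let f : tensorProd (G.comap (Finite.equivFin V).symm) (H.comap (Finite.equivFin W).symm) →g
      tensorProd G H :=
    ⟨Prod.map eG eH, fun h => ⟨eG.map_adj_iff.mpr h.1, eH.map_adj_iff.mpr h.2⟩⟩
  obtain ⟨m, hm, hmk⟩ := ENat.le_natCast_iff.mp (hk.of_hom f).chromaticNumber_le
  refine (Nat.sInf_le ?_).trans hmk
  exact ⟨_, _, _, _, hG.trans_eq (chromaticNumber_congr eG).symm,
    hH.trans_eq (chromaticNumber_congr eH).symm, hm⟩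

theorem poljakRodl_of_expGraph_hypothesis_general :
    ∀ (d c : ℕ), 0 < d → 2 ≤ c → ∀ (V : Type) [Fintype V], ∀ H : SimpleGraph V,
      ((c + 1 : ℕ) : ℕ∞) ≤ (expGraph H c).chromaticNumber →
      ((c * d + d : ℕ) : ℕ∞) ≤ H.chromaticNumber →
      ((d * (c + 1) : ℕ) : ℕ∞) ≤ (expGraph H (c * d)).chromaticNumber ∧
      poljakRodl (c * d + d) ≤ c * d := by
  intro d c _ _ V _ H hexp hH
  have : Nonempty V :=
    nonempty_of_two_le_chromaticNumber_expGraph (le_trans (by norm_cast; omega) hexp)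
  have hmul : ((d * (c + 1) : ℕ) : ℕ∞) ≤ (expGraph H (c * d)).chromaticNumber :=
    calc ((d * (c + 1) : ℕ) : ℕ∞) = d * ((c + 1 : ℕ) : ℕ∞) := by push_cast; rfl
      _ ≤ d * (expGraph H c).chromaticNumber := by gcongr
      _ ≤ (expGraph H (c * d)).chromaticNumber := mul_chromaticNumber_expGraph_le H c d
  refine ⟨hmul, poljakRodl_le_of_colorable hH ?_ (colorable_tensorProd_expGraph H _)⟩
  exact le_trans (by rw [Nat.mul_succ, Nat.mul_comm]) hmul

/-- Suppose for every `d ≥ 1` there are `c ≥ 2` and `H` with `χ(K_c^H) ≥ c + 1`,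
`χ(H) ≥ 2cd`, such that for all but finitely many `n`, `f(n + d) ≤ n`. Then in particular,
if `c` and `H` satisfy `χ(K_c^H) ≥ c + 1` and `χ(H) ≥ cd + d`, then
`χ(K_{cd}^H) ≥ d(c + 1)` and `f(cd + d) ≤ cd`. -/
theorem poljakRodl_of_expGraph_hypothesis
    (hyp : ∀ d : ℕ, 0 < d → ∃ c : ℕ, 2 ≤ c ∧ ∃ (p : ℕ) (H : SimpleGraph (Fin p)),
      ((c + 1 : ℕ) : ℕ∞) ≤ (expGraph H c).chromaticNumber ∧
      ((2 * c * d : ℕ) : ℕ∞) ≤ H.chromaticNumber ∧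
      ∀ᶠ n : ℕ in Filter.atTop, poljakRodl (n + d) ≤ n) :
    ∀ (d c : ℕ), 0 < d → 2 ≤ c → ∀ (V : Type) [Fintype V], ∀ H : SimpleGraph V,
      ((c + 1 : ℕ) : ℕ∞) ≤ (expGraph H c).chromaticNumber →
      ((c * d + d : ℕ) : ℕ∞) ≤ H.chromaticNumber →
      ((d * (c + 1) : ℕ) : ℕ∞) ≤ (expGraph H (c * d)).chromaticNumber ∧
      poljakRodl (c * d + d) ≤ c * d :=
  poljakRodl_of_expGraph_hypothesis_general
end
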